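/- Suppose X is c-quasiconvex, Y is c′-quasiconvex, G ⊊ X and G′ ⊊ Y are domains, and f : G → G′ is continuous at a non-isolated point x ∈ G. Then L(x,f)·δ_G(x)/(6c·δ_{G′}(x′)) ≤ L_{k_G}(x,f) ≤ 6c′·L(x,f)·δ_G(x)/δ_{G′}(x′), where x′ = f(x). -/
import Mathlib


open Metric Set Filter

section QHDefs

variable {X : Type*} [MetricSpace X] {Y : Type*} [MetricSpace Y]

/-- Distance to the boundary of `G`. -/
noncomputable def bdist (G : Set X) (z : X) : ℝ := Metric.infDist z (frontier G)

/-- A unit-speed (1-Lipschitz, arclength-parametrized) rectifiable curve in `G`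
from `x` to `y`, parametrized on `[0, L]`, where `L` is its length. -/
structure CurveIn (G : Set X) (γ : ℝ → X) (L : ℝ) (x y : X) : Prop where
  nonneg : 0 ≤ L
  lip : LipschitzOnWith 1 γ (Set.Icc 0 L)
  source : γ 0 = x
  target : γ L = y
  mem : ∀ t ∈ Set.Icc 0 L, γ t ∈ G

/-- Quasihyperbolic length of the subcurve `γ|[s,t]` in `G`: `∫_γ |dz|/δ_G(z)`. -/
noncomputable def qhLengthOn (G : Set X) (γ : ℝ → X) (s t : ℝ) : ℝ :=
  ∫ u in s..t, 1 / bdist G (γ u)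

/-- Quasihyperbolic length of a curve parametrized on `[0,L]`. -/
noncomputable def qhLength (G : Set X) (γ : ℝ → X) (L : ℝ) : ℝ := qhLengthOn G γ 0 L

/-- Quasihyperbolic distance in `G`. -/
noncomputable def qhDist (G : Set X) (x y : X) : ℝ :=
  sInf {l | ∃ γ L, CurveIn G γ L x y ∧ qhLength G γ L = l}

/-- `X` is a `c`-quasiconvex metric space. -/
def QCSpace (c : ℝ) (X : Type*) [MetricSpace X] : Prop :=
  ∀ x y : X, ∃ γ L, CurveIn (Set.univ : Set X) γ L x y ∧ L ≤ c * dist x y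

/-- A set `G` is `c`-quasiconvex. -/
def QCSet (c : ℝ) (G : Set X) : Prop :=
  ∀ x ∈ G, ∀ y ∈ G, ∃ γ L, CurveIn G γ L x y ∧ L ≤ c * dist x y

/-- A domain: a nonempty connected open set. -/
def IsDomainSet (G : Set X) : Prop := IsOpen G ∧ IsConnected G

/-- A proper domain: a nonempty connected open set, different from the whole space. -/
def IsProperDomain (G : Set X) : Prop := IsOpen G ∧ IsConnected G ∧ G ≠ Set.univ

/-- `G` is an `a`-John domain: each pair of points is joined by a rectifiable arc
satisfying the cone condition. -/
def IsJohn (a : ℝ) (G : Set X) : Prop :=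
  ∀ x ∈ G, ∀ y ∈ G, ∃ γ L, CurveIn G γ L x y ∧
    ∀ t ∈ Set.Icc 0 L, min t (L - t) ≤ a * bdist G (γ t)

/-- `G` is a `b`-uniform domain: each pair of points is joined by a double `b`-cone arc. -/
def IsUniform (b : ℝ) (G : Set X) : Prop :=
  ∀ x ∈ G, ∀ y ∈ G, ∃ γ L, CurveIn G γ L x y ∧ L ≤ b * dist x y ∧
    ∀ t ∈ Set.Icc 0 L, min t (L - t) ≤ b * bdist G (γ t)

/-- `G` is a locally `a`-John domain. -/
def LocallyJohn (a : ℝ) (G : Set X) : Prop :=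
  ∀ x ∈ G, ∀ r : ℝ, 0 < r → r ≤ bdist G x → IsJohn a (Metric.ball x r)

/-- The `h`-coarse quasihyperbolic length of the subcurve `γ|[s,t]` in `G`:
the supremum of sums `Σ k_G(x_{j-1},x_j)` over `h`-coarse sequences of successive
points of the arc (with the convention that it is `0` if there are none). -/
noncomputable def coarseQHLength (G : Set X) (γ : ℝ → X) (s t h : ℝ) : ℝ :=
  sSup {S | ∃ n : ℕ, 0 < n ∧ ∃ u : ℕ → ℝ,
    (∀ i < n, u i ≤ u (i + 1)) ∧ (∀ i ≤ n, u i ∈ Set.Icc s t) ∧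
    (∀ i < n, h ≤ qhDist G (γ (u i)) (γ (u (i + 1)))) ∧
    S = ∑ i ∈ Finset.range n, qhDist G (γ (u i)) (γ (u (i + 1)))}

/-- `γ` (parametrized on `[0,L]`) is a `(ν,h)`-solid arc in `G`. -/
def SolidArc (G : Set X) (γ : ℝ → X) (L ν h : ℝ) : Prop :=
  ∀ s t : ℝ, 0 ≤ s → s ≤ t → t ≤ L →
    coarseQHLength G γ s t h ≤ ν * qhDist G (γ s) (γ t)

/-- `γ` (parametrized on `[0,L]`) is an `ε`-short arc in `G`. -/
def ShortArc (G : Set X) (γ : ℝ → X) (L ε : ℝ) : Prop :=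
  qhLength G γ L ≤ qhDist G (γ 0) (γ L) + ε

/-- A map is weakly `H`-quasisymmetric. -/
def WeakQS (H : ℝ) (f : X → Y) : Prop :=
  ∀ x a b : X, dist x a ≤ dist x b → dist (f x) (f a) ≤ H * dist (f x) (f b)

/-- Image of a subset `D ⊆ G` under a homeomorphism `f : G ≃ₜ G'`, as a subset of `Y`. -/
def imSet {G : Set X} {G' : Set Y} (f : ↥G ≃ₜ ↥G') (D : Set X) : Set Y :=
  Subtype.val '' (f '' (Subtype.val ⁻¹' D))

/-- `f : G ≃ₜ G'` is `M`-quasihyperbolic. -/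
def MQH (M : ℝ) {G : Set X} {G' : Set Y} (f : ↥G ≃ₜ ↥G') : Prop :=
  ∀ x y : ↥G, (1 / M) * qhDist G ↑x ↑y ≤ qhDist G' ↑(f x) ↑(f y) ∧
    qhDist G' ↑(f x) ↑(f y) ≤ M * qhDist G ↑x ↑y

/-- `f : G ≃ₜ G'` is `C`-coarsely `M`-quasihyperbolic. -/
def CQH (M C : ℝ) {G : Set X} {G' : Set Y} (f : ↥G ≃ₜ ↥G') : Prop :=
  ∀ x y : ↥G, (qhDist G ↑x ↑y - C) / M ≤ qhDist G' ↑(f x) ↑(f y) ∧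
    qhDist G' ↑(f x) ↑(f y) ≤ M * qhDist G ↑x ↑y + C

/-- `f : G ≃ₜ G'` is freely `φ`-quasiconformal: in every subdomain, the
quasihyperbolic distances of `f` and `f⁻¹` are controlled by `φ`. -/
def FQC (φ : ℝ → ℝ) {G : Set X} {G' : Set Y} (f : ↥G ≃ₜ ↥G') : Prop :=
  ∀ D : Set X, ∀ hD : D ⊆ G, IsDomainSet D →
    ∀ x : X, ∀ hx : x ∈ D, ∀ y : X, ∀ hy : y ∈ D,
      qhDist (imSet f D) ↑(f ⟨x, hD hx⟩) ↑(f ⟨y, hD hy⟩) ≤ φ (qhDist D x y) ∧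
      qhDist D x y ≤ φ (qhDist (imSet f D) ↑(f ⟨x, hD hx⟩) ↑(f ⟨y, hD hy⟩))

end QHDefs

section Aux

open Metric Set Filter intervalIntegral

variable {X : Type*} [MetricSpace X]

lemma qhLengthOn_nonneg' (G : Set X) (γ : ℝ → X) {s t : ℝ} (h : s ≤ t) :
    0 ≤ qhLengthOn G γ s t := by
  apply intervalIntegral.integral_nonneg h
  intro u _
  exact div_nonneg zero_le_one Metric.infDist_nonneg

lemma qhSet_bddBelow (G : Set X) (x y : X) :
    BddBelow {l | ∃ γ L, CurveIn G γ L x y ∧ qhLength G γ L = l} := by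
  refine ⟨0, ?_⟩
  rintro l ⟨γ, L, hγ, rfl⟩
  exact qhLengthOn_nonneg' G γ hγ.nonneg

lemma qhDist_nonneg' (G : Set X) (x y : X) : 0 ≤ qhDist G x y := by
  apply Real.sInf_nonneg
  rintro l ⟨γ, L, hγ, rfl⟩
  exact qhLengthOn_nonneg' G γ hγ.nonneg

lemma QCSpace.preconnected {c : ℝ} (hX : QCSpace c X) : PreconnectedSpace X := by
  rw [preconnectedSpace_iff_univ]
  apply isPreconnected_of_forall_pair
  intro x _ y _
  obtain ⟨γ, L, hγ, -⟩ := hX x y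
  refine ⟨γ '' Set.Icc 0 L, Set.subset_univ _,
    ⟨0, ⟨le_refl 0, hγ.nonneg⟩, hγ.source⟩,
    ⟨L, ⟨hγ.nonneg, le_refl L⟩, hγ.target⟩, ?_⟩
  exact isPreconnected_Icc.image γ hγ.lip.continuousOn

lemma frontier_nonempty_of_proper {c : ℝ} (hX : QCSpace c X) {G : Set X}
    (hG : IsProperDomain G) : (frontier G).Nonempty := by
  have := hX.preconnected
  rw [Set.nonempty_iff_ne_empty]
  intro h
  rcases isClopen_iff.mp (isClopen_iff_frontier_eq_empty.mpr h) with h1 | h1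
  · exact hG.2.1.nonempty.ne_empty h1
  · exact hG.2.2 h1

lemma bdist_pos {G : Set X} (hO : IsOpen G) (hne : (frontier G).Nonempty)
    {a : X} (ha : a ∈ G) : 0 < bdist G a := by
  rw [bdist, ← isClosed_frontier.notMem_iff_infDist_pos hne]
  intro hmem
  rw [hO.frontier_eq] at hmem
  exact hmem.2 ha

lemma curve_mem_of_lt_bdist {G : Set X} (hO : IsOpen G) {γ : ℝ → X} {L : ℝ}
    (h0 : 0 ≤ L) (hcont : ContinuousOn γ (Set.Icc 0 L)) (ha : γ 0 ∈ G)
    (hclose : ∀ u ∈ Set.Icc 0 L, dist (γ 0) (γ u) < bdist G (γ 0)) :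
    ∀ u ∈ Set.Icc 0 L, γ u ∈ G := by
  have himg : γ '' Set.Icc 0 L ⊆ G ∪ (closure G)ᶜ := by
    rintro _ ⟨u, hu, rfl⟩
    by_cases hmem : γ u ∈ closure G
    · left
      by_contra hng
      have hfr : γ u ∈ frontier G := ⟨hmem, by rwa [hO.interior_eq]⟩
      have h1 : bdist G (γ 0) ≤ dist (γ 0) (γ u) := Metric.infDist_le_dist_of_mem hfr
      exact absurd (hclose u hu) (not_lt.mpr h1)
    · right; exact hmem
  have hsub : γ '' Set.Icc 0 L ⊆ G := by
    apply IsPreconnected.subset_left_of_subset_union hO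
      (isClosed_closure.isOpen_compl)
      (disjoint_compl_right.mono_left subset_closure) himg
      ⟨γ 0, ⟨0, ⟨le_refl 0, h0⟩, rfl⟩, ha⟩
      (isPreconnected_Icc.image γ hcont)
  exact fun u hu => hsub ⟨u, hu, rfl⟩

lemma integrand_contOn {G : Set X} (hO : IsOpen G) (hne : (frontier G).Nonempty)
    {γ : ℝ → X} {L : ℝ} (hcont : ContinuousOn γ (Set.Icc 0 L))
    (hmem : ∀ u ∈ Set.Icc 0 L, γ u ∈ G) :
    ContinuousOn (fun u => 1 / bdist G (γ u)) (Set.Icc 0 L) := by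
  apply ContinuousOn.div continuousOn_const
  · exact (Metric.continuous_infDist_pt (frontier G)).comp_continuousOn hcont
  · intro u hu
    exact (bdist_pos hO hne (hmem u hu)).ne'

lemma curve_dist_le {G : Set X} {γ : ℝ → X} {L : ℝ} {a b : X}
    (hγ : CurveIn G γ L a b) {s t : ℝ} (hs : s ∈ Set.Icc 0 L) (ht : t ∈ Set.Icc 0 L) :
    dist (γ s) (γ t) ≤ |s - t| := by
  have := hγ.lip.dist_le_mul s hs t ht
  simpa [Real.dist_eq] using this

/-- Upper bound for the quasihyperbolic distance between nearby points. -/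
lemma qh_upper {c : ℝ} (hc : 1 ≤ c) (hX : QCSpace c X) {G : Set X} (hO : IsOpen G)
    (hne : (frontier G).Nonempty) {a b : X} (ha : a ∈ G)
    (hsmall : c * dist a b ≤ bdist G a / 2) :
    qhDist G a b ≤ 2 * c * dist a b / bdist G a ∧
      {l | ∃ γ L, CurveIn G γ L a b ∧ qhLength G γ L = l}.Nonempty := by
  set δ := bdist G a with hδdef
  have hδ : 0 < δ := bdist_pos hO hne ha
  obtain ⟨γ, L, hγ, hL⟩ := hX a b
  have ha0 : γ 0 = a := hγ.source
  have hdistu : ∀ u ∈ Set.Icc 0 L, dist (γ 0) (γ u) ≤ u := by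
    intro u hu
    have := curve_dist_le hγ (Set.left_mem_Icc.mpr hγ.nonneg) hu
    calc dist (γ 0) (γ u) ≤ |0 - u| := this
    _ = u := by rw [zero_sub, abs_neg, abs_of_nonneg hu.1]
  have hLsmall : L ≤ δ / 2 := le_trans hL hsmall
  have hmem : ∀ u ∈ Set.Icc 0 L, γ u ∈ G := by
    apply curve_mem_of_lt_bdist hO hγ.nonneg hγ.lip.continuousOn (ha0 ▸ ha)
    intro u hu
    calc dist (γ 0) (γ u) ≤ u := hdistu u hu
    _ ≤ L := hu.2
    _ ≤ δ / 2 := hLsmall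
    _ < bdist G (γ 0) := by rw [ha0]; linarith
  have hcurve : CurveIn G γ L a b := ⟨hγ.nonneg, hγ.lip, hγ.source, hγ.target, hmem⟩
  have hbd : ∀ u ∈ Set.Icc 0 L, δ / 2 ≤ bdist G (γ u) := by
    intro u hu
    have h1 : bdist G a ≤ bdist G (γ u) + dist a (γ u) :=
      Metric.infDist_le_infDist_add_dist
    have h2 : dist a (γ u) ≤ δ / 2 := by
      rw [← ha0]
      exact le_trans (hdistu u hu) (le_trans hu.2 hLsmall)
    linarith
  have hint : qhLength G γ L ≤ 2 * c * dist a b / δ := by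
    have hInteg : IntervalIntegrable (fun u => 1 / bdist G (γ u)) MeasureTheory.volume 0 L := by
      apply ContinuousOn.intervalIntegrable
      rw [Set.uIcc_of_le hγ.nonneg]
      exact integrand_contOn hO hne hγ.lip.continuousOn hmem
    have hmono : qhLength G γ L ≤ ∫ _ in (0:ℝ)..L, 2 / δ := by
      apply intervalIntegral.integral_mono_on hγ.nonneg hInteg (intervalIntegrable_const)
      intro u hu
      rw [div_le_div_iff₀ (bdist_pos hO hne (hmem u hu)) hδ, one_mul]
      have := hbd u hu
      linarith
    have hconst : (∫ _ in (0:ℝ)..L, 2 / δ) = L * (2 / δ) := by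
      rw [intervalIntegral.integral_const, smul_eq_mul, sub_zero]
    rw [hconst] at hmono
    calc qhLength G γ L ≤ L * (2 / δ) := hmono
    _ ≤ (c * dist a b) * (2 / δ) := by
        apply mul_le_mul_of_nonneg_right hL
        positivity
    _ = 2 * c * dist a b / δ := by ring
  have hmem' : qhLength G γ L ∈ {l | ∃ γ L, CurveIn G γ L a b ∧ qhLength G γ L = l} :=
    ⟨γ, L, hcurve, rfl⟩
  exact ⟨le_trans (csInf_le (qhSet_bddBelow G a b) hmem') hint, ⟨_, hmem'⟩⟩

/-- Lower bound for the quasihyperbolic distance between nearby points. -/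
lemma qh_lower {G : Set X} (hO : IsOpen G)
    (hne : (frontier G).Nonempty) {a b : X} (ha : a ∈ G)
    (hd : dist a b ≤ bdist G a)
    (hnonempty : {l | ∃ γ L, CurveIn G γ L a b ∧ qhLength G γ L = l}.Nonempty) :
    dist a b / (2 * bdist G a) ≤ qhDist G a b := by
  set δ := bdist G a with hδdef
  have hδ : 0 < δ := bdist_pos hO hne ha
  apply le_csInf hnonempty
  rintro l ⟨γ, L, hγ, rfl⟩
  have hLd : dist a b ≤ L := by
    have := curve_dist_le hγ (Set.left_mem_Icc.mpr hγ.nonneg)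
      (Set.right_mem_Icc.mpr hγ.nonneg)
    rw [hγ.source, hγ.target] at this
    calc dist a b ≤ |0 - L| := this
    _ = L := by rw [zero_sub, abs_neg, abs_of_nonneg hγ.nonneg]
  have hbd : ∀ u ∈ Set.Icc 0 L, bdist G (γ u) ≤ δ + L := by
    intro u hu
    have h1 : bdist G (γ u) ≤ bdist G a + dist (γ u) a :=
      Metric.infDist_le_infDist_add_dist
    have h2 : dist (γ u) a ≤ L := by
      have := curve_dist_le hγ hu (Set.left_mem_Icc.mpr hγ.nonneg)
      rw [hγ.source] at this
      calc dist (γ u) a ≤ |u - 0| := this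
      _ = u := by rw [sub_zero, abs_of_nonneg hu.1]
      _ ≤ L := hu.2
    linarith
  have hInteg : IntervalIntegrable (fun u => 1 / bdist G (γ u)) MeasureTheory.volume 0 L := by
    apply ContinuousOn.intervalIntegrable
    rw [Set.uIcc_of_le hγ.nonneg]
    exact integrand_contOn hO hne hγ.lip.continuousOn hγ.mem
  have hmono : (∫ _ in (0:ℝ)..L, 1 / (δ + L)) ≤ qhLength G γ L := by
    apply intervalIntegral.integral_mono_on hγ.nonneg (intervalIntegrable_const) hInteg
    intro u hu
    have hpos : 0 < bdist G (γ u) := bdist_pos hO hne (hγ.mem u hu)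
    rw [div_le_div_iff₀ (by linarith [hγ.nonneg] : (0:ℝ) < δ + L) hpos, one_mul]
    have := hbd u hu
    linarith
  have hconst : (∫ _ in (0:ℝ)..L, 1 / (δ + L)) = L / (δ + L) := by
    rw [intervalIntegral.integral_const, smul_eq_mul, sub_zero, mul_one_div]
  rw [hconst] at hmono
  refine le_trans ?_ hmono
  rw [div_le_div_iff₀ (by positivity) (by linarith [hγ.nonneg] : (0:ℝ) < δ + L)]
  nlinarith [hγ.nonneg, dist_nonneg (x := a) (y := b)]

lemma qh_set_rev {G : Set X} {a b : X} {l : ℝ}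
    (h : l ∈ {l | ∃ γ L, CurveIn G γ L a b ∧ qhLength G γ L = l}) :
    l ∈ {l | ∃ γ L, CurveIn G γ L b a ∧ qhLength G γ L = l} := by
  obtain ⟨γ, L, hγ, rfl⟩ := h
  have hrev : LipschitzWith 1 (fun u : ℝ => L - u) := by
    apply LipschitzWith.of_dist_le_mul
    intro p q
    rw [NNReal.coe_one, one_mul, Real.dist_eq, Real.dist_eq]
    rw [show L - p - (L - q) = -(p - q) by ring, abs_neg]
  have hmaps : Set.MapsTo (fun u : ℝ => L - u) (Set.Icc 0 L) (Set.Icc 0 L) := by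
    intro u hu
    simp only [Set.mem_Icc] at hu ⊢
    constructor <;> linarith [hu.1, hu.2]
  have hlip : LipschitzOnWith 1 (γ ∘ fun u : ℝ => L - u) (Set.Icc 0 L) := by
    have := hγ.lip.comp (hrev.lipschitzOnWith (s := Set.Icc 0 L)) hmaps
    simpa using this
  refine ⟨γ ∘ fun u : ℝ => L - u, L,
    ⟨hγ.nonneg, hlip, by simp [hγ.target], by simp [hγ.source],
      fun t ht => hγ.mem (L - t) (hmaps ht)⟩, ?_⟩
  show qhLengthOn G (γ ∘ fun u : ℝ => L - u) 0 L = qhLengthOn G γ 0 L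
  unfold qhLengthOn
  have := intervalIntegral.integral_comp_sub_left
    (a := (0:ℝ)) (b := L) (fun v => 1 / bdist G (γ v)) L
  simpa using this

lemma qhDist_symm (G : Set X) (a b : X) : qhDist G a b = qhDist G b a := by
  unfold qhDist
  congr 1
  ext l
  exact ⟨fun h => qh_set_rev h, fun h => qh_set_rev h⟩

lemma limsup_sandwich {α : Type*} {l : Filter α} [hl : l.NeBot] {ρ κ : α → ℝ} {c₁ c₂ : ℝ}
    (hc₁ : 0 < c₁) (hc₂ : 0 < c₂)
    (h : ∀ᶠ y in l, 0 ≤ ρ y ∧ c₁ * ρ y ≤ κ y ∧ κ y ≤ c₂ * ρ y) :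
    c₁ * Filter.limsup ρ l ≤ Filter.limsup κ l ∧
      Filter.limsup κ l ≤ c₂ * Filter.limsup ρ l := by
  rw [Filter.limsup_eq, Filter.limsup_eq]
  set Sρ := {a | ∀ᶠ y in l, ρ y ≤ a} with hSρ
  set Sκ := {a | ∀ᶠ y in l, κ y ≤ a} with hSκ
  have hρ_nonneg : ∀ a ∈ Sρ, 0 ≤ a := by
    intro a hha
    obtain ⟨y, hy1, hy2⟩ := (hha.and h).exists
    exact le_trans hy2.1 hy1
  have hκ_nonneg : ∀ b ∈ Sκ, 0 ≤ b := by
    intro b hb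
    obtain ⟨y, hy1, hy2⟩ := (hb.and h).exists
    have : 0 ≤ κ y := le_trans (mul_nonneg hc₁.le hy2.1) hy2.2.1
    linarith
  have hρ_bdd : BddBelow Sρ := ⟨0, hρ_nonneg⟩
  have hκ_bdd : BddBelow Sκ := ⟨0, hκ_nonneg⟩
  have hρκ : ∀ a ∈ Sρ, c₂ * a ∈ Sκ := by
    intro a hha
    filter_upwards [hha, h] with y hy1 hy2
    exact le_trans hy2.2.2 (mul_le_mul_of_nonneg_left hy1 hc₂.le)
  have hκρ : ∀ b ∈ Sκ, b / c₁ ∈ Sρ := by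
    intro b hb
    filter_upwards [hb, h] with y hy1 hy2
    rw [le_div_iff₀ hc₁, mul_comm]
    exact le_trans hy2.2.1 hy1
  constructor
  · rcases Set.eq_empty_or_nonempty Sκ with hemp | hne
    · have hρemp : Sρ = ∅ := by
        rw [Set.eq_empty_iff_forall_notMem]
        intro a hha
        exact Set.eq_empty_iff_forall_notMem.mp hemp _ (hρκ a hha)
      rw [hemp, hρemp, Real.sInf_empty, mul_zero]
    · apply le_csInf hne
      intro b hb
      have h1 : sInf Sρ ≤ b / c₁ := csInf_le hρ_bdd (hκρ b hb)
      rw [mul_comm, ← le_div_iff₀ hc₁]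
      exact h1
  · rcases Set.eq_empty_or_nonempty Sρ with hemp | hne
    · have hκemp : Sκ = ∅ := by
        rw [Set.eq_empty_iff_forall_notMem]
        intro b hb
        exact Set.eq_empty_iff_forall_notMem.mp hemp _ (hκρ b hb)
      rw [hemp, hκemp, Real.sInf_empty, mul_zero]
    · rw [mul_comm, ← div_le_iff₀ hc₂]
      apply le_csInf hne
      intro a hha
      rw [div_le_iff₀ hc₂, mul_comm]
      exact csInf_le hκ_bdd (hρκ a hha)

lemma arith_sandwich {δ δ' cc cc' d d' qh qh' : ℝ} (hδ : 0 < δ) (hδ' : 0 < δ')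
    (hc : 1 ≤ cc) (hc' : 1 ≤ cc') (hd : 0 < d) (hd' : 0 ≤ d')
    (h1 : d / (2 * δ) ≤ qh) (h2 : qh ≤ 2 * cc * d / δ)
    (h3 : d' / (2 * δ') ≤ qh') (h4 : qh' ≤ 2 * cc' * d' / δ') :
    δ / (6 * cc * δ') * (d' / d) ≤ qh' / qh ∧
      qh' / qh ≤ 6 * cc' * δ / δ' * (d' / d) := by
  have hcc : (0:ℝ) < cc := lt_of_lt_of_le one_pos hc
  have hcc' : (0:ℝ) < cc' := lt_of_lt_of_le one_pos hc'
  have hqh_pos : 0 < qh := lt_of_lt_of_le (div_pos hd (by linarith)) h1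
  have hqh'_nonneg : 0 ≤ qh' := le_trans (div_nonneg hd' (by linarith)) h3
  have h1' : d ≤ qh * (2 * δ) := (div_le_iff₀ (by linarith)).mp h1
  have h2' : qh * δ ≤ 2 * cc * d := (le_div_iff₀ hδ).mp h2
  have h3' : d' ≤ qh' * (2 * δ') := (div_le_iff₀ (by linarith)).mp h3
  have h4' : qh' * δ' ≤ 2 * cc' * d' := (le_div_iff₀ hδ').mp h4
  constructor
  · have e1 : δ / (6 * cc * δ') * (d' / d) = δ * d' / (6 * cc * δ' * d) := by
      field_simp
    rw [e1, div_le_div_iff₀ (by positivity) hqh_pos]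
    have P1 : qh * δ * d' ≤ 2 * cc * d * d' := mul_le_mul_of_nonneg_right h2' hd'
    have P2 : 3 * cc * d * d' ≤ 3 * cc * d * (qh' * (2 * δ')) :=
      mul_le_mul_of_nonneg_left h3' (by positivity)
    nlinarith [mul_nonneg (mul_nonneg hcc.le hd.le) hd']
  · have e2 : 6 * cc' * δ / δ' * (d' / d) = 6 * cc' * δ * d' / (δ' * d) := by
      field_simp
    rw [e2, div_le_div_iff₀ hqh_pos (by positivity)]
    have Q1 : qh' * δ' * d ≤ 2 * cc' * d' * d := mul_le_mul_of_nonneg_right h4' hd.le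
    have Q2 : 2 * cc' * d' * d ≤ 2 * cc' * d' * (qh * (2 * δ)) :=
      mul_le_mul_of_nonneg_left h1' (by positivity)
    nlinarith [mul_nonneg (mul_nonneg (mul_nonneg hcc'.le hδ.le) hd') hqh_pos.le]

end Aux

/-- Lemma 9, first chain: For `f : G → G'` continuous at a
non-isolated point `x ∈ G` (with `X` `c`-quasiconvex and `Y` `c'`-quasiconvex),
`L(x,f)·δ_G(x)/(6c·δ_{G'}(x')) ≤ L_{k_G}(x,f) ≤ 6c'·L(x,f)·δ_G(x)/δ_{G'}(x')`. -/
theorem stmt15 {X : Type*} [MetricSpace X] {Y : Type*} [MetricSpace Y]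
    (c c' : ℝ) (hc : 1 ≤ c) (hc' : 1 ≤ c') (hX : QCSpace c X) (hY : QCSpace c' Y)
    (G : Set X) (G' : Set Y) (hG : IsProperDomain G) (hG' : IsProperDomain G')
    (f : X → Y) (hmaps : Set.MapsTo f G G')
    (x : X) (hx : x ∈ G) (hacc : (nhdsWithin x (G \ {x})).NeBot)
    (hcont : ContinuousWithinAt f G x) :
    Filter.limsup (fun y => dist (f y) (f x) / dist y x) (nhdsWithin x (G \ {x})) *
        bdist G x / (6 * c * bdist G' (f x)) ≤
      Filter.limsup (fun y => qhDist G' (f y) (f x) / qhDist G x y)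
        (nhdsWithin x (G \ {x})) ∧
    Filter.limsup (fun y => qhDist G' (f y) (f x) / qhDist G x y)
        (nhdsWithin x (G \ {x})) ≤
      6 * c' * Filter.limsup (fun y => dist (f y) (f x) / dist y x)
        (nhdsWithin x (G \ {x})) * bdist G x / bdist G' (f x) := by
  haveI := hacc
  have hfrG : (frontier G).Nonempty := frontier_nonempty_of_proper hX hG
  have hfrG' : (frontier G').Nonempty := frontier_nonempty_of_proper hY hG'
  have hGo : IsOpen G := hG.1
  have hGo' : IsOpen G' := hG'.1
  have hfx : f x ∈ G' := hmaps hx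
  have hδ : 0 < bdist G x := bdist_pos hGo hfrG hx
  have hδ' : 0 < bdist G' (f x) := bdist_pos hGo' hfrG' hfx
  have hcpos : (0:ℝ) < c := lt_of_lt_of_le one_pos hc
  have hc'pos : (0:ℝ) < c' := lt_of_lt_of_le one_pos hc'
  set l := nhdsWithin x (G \ {x}) with hldef
  have hE1 : ∀ᶠ y in l, y ∈ G \ {x} := eventually_mem_nhdsWithin
  have hE2 : ∀ᶠ y in l, dist y x < bdist G x / (2 * c) := by
    apply Filter.Eventually.filter_mono nhdsWithin_le_nhds
    have hball : Metric.ball x (bdist G x / (2 * c)) ∈ nhds x :=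
      Metric.ball_mem_nhds x (by positivity)
    filter_upwards [hball] with y hy
    exact Metric.mem_ball.mp hy
  have htends : Filter.Tendsto f l (nhds (f x)) :=
    hcont.mono_left (nhdsWithin_mono x Set.diff_subset)
  have hE3 : ∀ᶠ y in l, dist (f y) (f x) < bdist G' (f x) / (2 * c') :=
    Metric.tendsto_nhds.mp htends _ (by positivity)
  have hsand : ∀ᶠ y in l,
      0 ≤ dist (f y) (f x) / dist y x ∧
      bdist G x / (6 * c * bdist G' (f x)) * (dist (f y) (f x) / dist y x) ≤
        qhDist G' (f y) (f x) / qhDist G x y ∧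
      qhDist G' (f y) (f x) / qhDist G x y ≤
        6 * c' * bdist G x / bdist G' (f x) * (dist (f y) (f x) / dist y x) := by
    filter_upwards [hE1, hE2, hE3] with y hy1 hy2 hy3
    obtain ⟨hyG, hyx⟩ := hy1
    have hd : 0 < dist y x := dist_pos.mpr (fun h => hyx (by simp [h]))
    have hd' : 0 ≤ dist (f y) (f x) := dist_nonneg
    -- bounds in G
    have h2cd : dist y x * (2 * c) < bdist G x := (lt_div_iff₀ (by positivity)).mp hy2
    have hsmallG : c * dist x y ≤ bdist G x / 2 := by
      rw [dist_comm x y]; nlinarith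
    obtain ⟨hqh_up, hqh_ne⟩ := qh_upper hc hX hGo hfrG hx hsmallG
    have hdxy : dist x y ≤ bdist G x := by rw [dist_comm x y]; nlinarith
    have hqh_low : dist x y / (2 * bdist G x) ≤ qhDist G x y :=
      qh_lower hGo hfrG hx hdxy hqh_ne
    rw [dist_comm x y] at hqh_up hqh_low
    -- bounds in G'
    have h2cd' : dist (f y) (f x) * (2 * c') < bdist G' (f x) :=
      (lt_div_iff₀ (by positivity)).mp hy3
    have hsmallG' : c' * dist (f x) (f y) ≤ bdist G' (f x) / 2 := by
      rw [dist_comm (f x) (f y)]; nlinarith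
    obtain ⟨hqh_up', hqh_ne'⟩ := qh_upper hc' hY hGo' hfrG' hfx hsmallG'
    have hdxy' : dist (f x) (f y) ≤ bdist G' (f x) := by
      rw [dist_comm (f x) (f y)]; nlinarith
    have hqh_low' : dist (f x) (f y) / (2 * bdist G' (f x)) ≤ qhDist G' (f x) (f y) :=
      qh_lower hGo' hfrG' hfx hdxy' hqh_ne'
    rw [dist_comm (f x) (f y)] at hqh_up' hqh_low'
    rw [qhDist_symm G' (f x) (f y)] at hqh_up' hqh_low'
    have := arith_sandwich hδ hδ' hc hc' hd hd' hqh_low hqh_up hqh_low' hqh_up'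
    exact ⟨div_nonneg hd' hd.le, this.1, this.2⟩
  have hcsand := limsup_sandwich (l := l)
    (by positivity : (0:ℝ) < bdist G x / (6 * c * bdist G' (f x)))
    (by positivity : (0:ℝ) < 6 * c' * bdist G x / bdist G' (f x)) hsand
  constructor
  · refine le_trans (le_of_eq (by ring)) hcsand.1
  · refine le_trans hcsand.2 (le_of_eq (by ring))
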